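/- Fix N ≥ 2, distinct players i ≠ j in Fin N, an outcome o ∈ [0,1], a rating vector θ ∈ ℝ^N, and a learning rate η > 0. Let p = σ(θ_i − θ_j) with σ(x) = 1/(1+e^{−x}), and let θ' be the Elo-updated vector: θ'_i = θ_i + η(o − p), θ'_j = θ_j − η(o − p), and θ'_k = θ_k for k ∉ {i, j}. Then θ' = θ − η ∇f(θ), where f(θ) = −(o log σ(θ_i − θ_j) + (1 − o) log(1 − σ(θ_i − θ_j))) is the per-round binary cross-entropy loss; that is, the Elo update is exactly one step of (unprojected) online gradient descent on f with step size η. -/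

import Mathlib

/-- The logistic function `σ(x) = 1 / (1 + e^{-x})`. -/
noncomputable def logistic (x : ℝ) : ℝ := 1 / (1 + Real.exp (-x))

/-! The loss is `ψ ↦ ℓ(ψ i - ψ j)` with `ℓ(s) = -(o log σ(s) + (1 - o) log (1 - σ(s)))`.
Since `σ' = σ (1 - σ)`, we get `ℓ'(s) = σ(s) - o`, and the Riesz representative of the
functional `ψ ↦ ψ i - ψ j` is `e_i - e_j`; hence `∇f(θ) = (p - o) (e_i - e_j)`, which is
exactly minus the Elo correction divided by `η`. -/

open Real EuclideanSpace

lemma logistic_eq_sigmoid : logistic = sigmoid := by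
  funext x
  rw [logistic, sigmoid_def, one_div]

noncomputable def logisticLoss (o s : ℝ) : ℝ :=
  -(o * log (logistic s) + (1 - o) * log (1 - logistic s))

lemma hasDerivAt_logisticLoss (o s : ℝ) :
    HasDerivAt (logisticLoss o) (logistic s - o) s := by
  have hpos : sigmoid s ≠ 0 := (sigmoid_pos s).ne'
  have hlt : 1 - sigmoid s ≠ 0 := (sub_pos.2 (sigmoid_lt_one s)).ne'
  have hlog : HasDerivAt (fun t ↦ log (sigmoid t)) (1 - sigmoid s) s := by
    convert (hasDerivAt_sigmoid s).log hpos using 1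
    field_simp
  have hlog_one_sub : HasDerivAt (fun t ↦ log (1 - sigmoid t)) (-sigmoid s) s := by
    convert ((hasDerivAt_sigmoid s).const_sub 1).log hlt using 1
    field_simp
  unfold logisticLoss
  rw [logistic_eq_sigmoid]
  exact ((hlog.const_mul o).add (hlog_one_sub.const_mul (1 - o))).neg.congr_deriv (by ring)

section

variable {ι : Type*} [Fintype ι] [DecidableEq ι]

lemma toDual_single_sub_single (i j : ι) :
    InnerProductSpace.toDual ℝ (EuclideanSpace ℝ ι) (single i 1 - single j 1) =
      proj i - proj j := by
  ext v
  simp [inner_single_left]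

lemma HasDerivAt.hasGradientAt_comp_apply_sub {g : ℝ → ℝ} {g' : ℝ} {x : EuclideanSpace ℝ ι}
    {i j : ι} (hg : HasDerivAt g g' (x i - x j)) :
    HasGradientAt (fun ψ : EuclideanSpace ℝ ι ↦ g (ψ i - ψ j))
      (g' • (single i 1 - single j 1)) x := by
  rw [hasGradientAt_iff_hasFDerivAt, map_smul, toDual_single_sub_single]
  exact hg.comp_hasFDerivAt x (proj i - proj j : EuclideanSpace ℝ ι →L[ℝ] ℝ).hasFDerivAt

end

theorem elo_update_is_gradient_step_general
    (N : ℕ) (i j : Fin N) (hij : i ≠ j)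
    (o : ℝ) (η : ℝ)
    (θ θ' : EuclideanSpace ℝ (Fin N))
    (f : EuclideanSpace ℝ (Fin N) → ℝ)
    (hf : ∀ ψ, f ψ = -(o * Real.log (logistic (ψ i - ψ j))
      + (1 - o) * Real.log (1 - logistic (ψ i - ψ j))))
    (hupd_i : θ' i = θ i + η * (o - logistic (θ i - θ j)))
    (hupd_j : θ' j = θ j - η * (o - logistic (θ i - θ j)))
    (hupd_k : ∀ k, k ≠ i → k ≠ j → θ' k = θ k) :
    θ' = θ - η • gradient f θ := by
  have hgrad : HasGradientAt f
      ((logistic (θ i - θ j) - o) • (single i 1 - single j 1)) θ := by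
    rw [show f = fun ψ ↦ logisticLoss o (ψ i - ψ j) from funext hf]
    exact (hasDerivAt_logisticLoss o _).hasGradientAt_comp_apply_sub
  rw [hgrad.gradient]
  ext k
  simp only [PiLp.sub_apply, PiLp.smul_apply, PiLp.single_apply, smul_eq_mul]
  by_cases hki : k = i
  · rw [hki, if_pos rfl, if_neg hij, hupd_i]
    ring
  by_cases hkj : k = j
  · rw [hkj, if_pos rfl, if_neg hij.symm, hupd_j]
    ring
  rw [if_neg hki, if_neg hkj, hupd_k k hki hkj]
  ring

/-- The Elo rating update `θ' i = θ i + η (o - p)`, `θ' j = θ j - η (o - p)` (and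
`θ' k = θ k` otherwise), with prediction `p = σ(θ i - θ j)`, is exactly one step of
unprojected online gradient descent with step size `η` on the per-round binary
cross-entropy loss `f(θ) = -(o log σ(θ i - θ j) + (1 - o) log (1 - σ(θ i - θ j)))`. -/
theorem elo_update_is_gradient_step
    (N : ℕ) (hN : 2 ≤ N) (i j : Fin N) (hij : i ≠ j)
    (o : ℝ) (ho : o ∈ Set.Icc (0 : ℝ) 1) (η : ℝ) (hη : 0 < η)
    (θ θ' : EuclideanSpace ℝ (Fin N))
    (f : EuclideanSpace ℝ (Fin N) → ℝ)
    (hf : ∀ ψ, f ψ = -(o * Real.log (logistic (ψ i - ψ j))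
      + (1 - o) * Real.log (1 - logistic (ψ i - ψ j))))
    (hupd_i : θ' i = θ i + η * (o - logistic (θ i - θ j)))
    (hupd_j : θ' j = θ j - η * (o - logistic (θ i - θ j)))
    (hupd_k : ∀ k, k ≠ i → k ≠ j → θ' k = θ k) :
    θ' = θ - η • gradient f θ :=
  elo_update_is_gradient_step_general N i j hij o η θ θ' f hf hupd_i hupd_j hupd_k
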